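/- Let 𝓡 be a reaction network on d ≥ 2 species containing the reactions y*_1 → y*_2, …, y*_{M−1} → y*_M, y*_M → y*_1, and let C be the set of all complexes (sources and products) of 𝓡. Assume: (1) C is totally ordered by the componentwise strict order <, i.e., for any distinct y, y' ∈ C either y < y' or y' < y; (2) for each m ∈ {1,…,M}, the only reaction of 𝓡 whose source complex is y*_m is y*_m → y*_{m+1} (with y*_{M+1} = y*_1); (3) y*_{m_0} = 0 (the zero vector) for some m_0 ∈ {1,…,M}; (4) the set U := {i : e_i ∈ span_ℝ{y' − y : y → y' ∈ 𝓡}} is nonempty, where e_i is the i-th standard basis vector. Then for any i_1 ∈ U, the sequence {x_n}_{n≥1} defined by (x_n)_{i_1} = n + (y*_1)_{i_1} and (x_n)_i = (y*_1)_i for i ≠ i_1 is a tier sequence of 𝓡, and R = (y*_1 → y*_2, …, y*_M → y*_1) is a strong tier-1 cycle along {x_n}. -/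

import Mathlib

open Filter Finset

/-- A reaction network on `d` species: every reaction has a nonnegative source complex and
a nonnegative product complex, and the source differs from the product. -/
def IsRN (d : ℕ) (Rn : Finset ((Fin d → ℤ) × (Fin d → ℤ))) : Prop :=
  ∀ r ∈ Rn, (∀ i, 0 ≤ r.1 i) ∧ (∀ i, 0 ≤ r.2 i) ∧ r.1 ≠ r.2

/-- Mass-action intensity `λ_y(x) = ∏ i, x_i!/(x_i - y_i)!` if `x ≥ y` componentwise, else `0`. -/
def intensity (d : ℕ) (y x : Fin d → ℤ) : ℕ :=
  if ∀ i, y i ≤ x i then ∏ i : Fin d, Nat.descFactorial (x i).toNat ((y i).toNat) else 0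

/-- Cyclic successor on `{1, …, M}`: `cyc M m = m + 1` for `m < M` and `cyc M M = 1`. -/
def cyc (M m : ℕ) : ℕ := if m = M then 1 else m + 1

/-- `xshift d ystar x m n = x^m_n = x_n + ∑_{j=1}^{m-1} (y*_{j+1} - y*_j)`. -/
def xshift (d : ℕ) (ystar : ℕ → Fin d → ℤ) (x : ℕ → Fin d → ℤ) (m n : ℕ) : Fin d → ℤ :=
  fun i => x n i + ∑ j ∈ Finset.Ico 1 m, (ystar (j + 1) i - ystar j i)

/-- The ordered list `(y*_1 → y*_2, …, y*_M → y*_1)` consists of reactions of the network. -/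
def IsCycleIn (d : ℕ) (Rn : Finset ((Fin d → ℤ) × (Fin d → ℤ))) (M : ℕ)
    (ystar : ℕ → Fin d → ℤ) : Prop :=
  ∀ m, 1 ≤ m → m ≤ M → (ystar m, ystar (cyc M m)) ∈ Rn

/-- Condition (ii) of a strong tier-1 cycle, with explicit witness `m0`. -/
def TierLimits (d : ℕ) (Rn : Finset ((Fin d → ℤ) × (Fin d → ℤ))) (M : ℕ)
    (ystar : ℕ → Fin d → ℤ) (x : ℕ → Fin d → ℤ) (m0 : ℕ) : Prop :=
  ∀ m, 1 ≤ m → m ≤ M → ∀ y y' : Fin d → ℤ, (y, y') ∈ Rn →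
    (y, y') ≠ (ystar m, ystar (cyc M m)) →
    Tendsto (fun n =>
        ((intensity d (ystar m0) (xshift d ystar x m0 n) : ℝ) *
          (intensity d y (xshift d ystar x m n) : ℝ)) /
          (intensity d (ystar m) (xshift d ystar x m n) : ℝ))
      atTop (nhds 0)

/-- `R = (y*_1 → y*_2, …, y*_M → y*_1)` is a strong tier-1 cycle along `x`. -/
def IsStrongT1Cycle (d : ℕ) (Rn : Finset ((Fin d → ℤ) × (Fin d → ℤ))) (M : ℕ)
    (ystar : ℕ → Fin d → ℤ) (x : ℕ → Fin d → ℤ) : Prop :=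
  IsCycleIn d Rn M ystar ∧
  (∀ n, 0 < intensity d (ystar 1) (x n)) ∧
  ∃ m0, 1 ≤ m0 ∧ m0 ≤ M ∧ TierLimits d Rn M ystar x m0

/-- `y` is a source complex of the network. -/
def IsSourceIn (d : ℕ) (Rn : Finset ((Fin d → ℤ) × (Fin d → ℤ))) (y : Fin d → ℤ) : Prop :=
  ∃ y', (y, y') ∈ Rn

/-- `y` is a complex (source or product) of the network. -/
def ComplexOf (d : ℕ) (Rn : Finset ((Fin d → ℤ) × (Fin d → ℤ))) (y : Fin d → ℤ) : Prop :=
  ∃ r ∈ Rn, r.1 = y ∨ r.2 = y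

/-- Tier sequence of a reaction network. -/
def IsTierSeq (d : ℕ) (Rn : Finset ((Fin d → ℤ) × (Fin d → ℤ)))
    (x : ℕ → Fin d → ℤ) : Prop :=
  (∀ n i, 0 ≤ x n i) ∧
  (∃ i, Tendsto (fun n => x n i) atTop atTop) ∧
  (∀ i, (Tendsto (fun n => x n i) atTop atTop ∧ Monotone fun n => x n i) ∨
      (∃ c : ℤ, ∀ n, x n i = c)) ∧
  (∀ y y' : Fin d → ℤ, IsSourceIn d Rn y → IsSourceIn d Rn y' →
    (Tendsto (fun n => (intensity d y (x n) : ℝ) / (intensity d y' (x n) : ℝ)) atTop atTop ∨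
      ∃ c : ℝ, Tendsto (fun n => (intensity d y (x n) : ℝ) / (intensity d y' (x n) : ℝ))
        atTop (nhds c)))

/-- One reaction step: some reaction `y → y'` with `y ≤ a` fires, giving `b = a + y' - y`. -/
def ReactStep (d : ℕ) (Rn : Finset ((Fin d → ℤ) × (Fin d → ℤ)))
    (a b : Fin d → ℤ) : Prop :=
  ∃ r ∈ Rn, (∀ i, r.1 i ≤ a i) ∧ b = fun i => a i + (r.2 i - r.1 i)

/-- `w` is reachable from `z` by finitely many reaction steps. -/
def Reachable (d : ℕ) (Rn : Finset ((Fin d → ℤ) × (Fin d → ℤ)))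
    (z w : Fin d → ℤ) : Prop :=
  Relation.ReflTransGen (ReactStep d Rn) z w

/-- Weak reversibility: every reaction lies on a directed cycle of reactions. -/
def WeaklyReversible (d : ℕ) (Rn : Finset ((Fin d → ℤ) × (Fin d → ℤ))) : Prop :=
  ∀ r ∈ Rn, ∃ (K : ℕ) (ys : ℕ → Fin d → ℤ), 2 ≤ K ∧
    ys 1 = r.1 ∧ ys 2 = r.2 ∧
    (∀ j, 1 ≤ j → j < K → (ys j, ys (j + 1)) ∈ Rn) ∧
    (ys K, ys 1) ∈ Rn

open Topology

/-!
Put `x_n = y*_1 + (n + 1) e_{i₁}`; telescoping gives `x^m_n = y*_m + (n + 1) e_{i₁}`. For a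
vector `z` and `y ≤ z`, the intensity `λ_y(z + (n + 1) e_{i₁})` is a positive constant times the
falling factorial `(n + 1 + z_{i₁})^{(y_{i₁})}`, a polynomial of degree `y_{i₁}` in `n`; if instead
`y > z` in every coordinate, it vanishes, because some coordinate `i₂ ≠ i₁` (here `d ≥ 2`) stays
at `z_{i₂} < y_{i₂}`. Total ordering of the complexes leaves only these two cases, so every
ratio of source intensities along `x_n` tends to `0`, a positive constant or `∞`. In the cycle
condition the factor `λ_{y*_{m₀}} = λ_0` is `1`, and every other source `y ≠ y*_m` is either
strictly below `y*_m`, giving degree `y_{i₁} < (y*_m)_{i₁}` and ratio `→ 0`, or strictly above it,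
giving intensity `0`.
-/

section DescFactorial

theorem tendsto_descFactorial_div_descFactorial_atTop {a b : ℕ} (h : b < a) :
    Tendsto (fun m : ℕ => (m.descFactorial a : ℝ) / m.descFactorial b) atTop atTop := by
  refine tendsto_atTop_mono' _ ?_ (tendsto_natCast_atTop_atTop.comp (tendsto_sub_atTop_nat a))
  filter_upwards [eventually_ge_atTop a] with m hm
  have hb : (0 : ℝ) < m.descFactorial b := by exact_mod_cast Nat.descFactorial_pos.mpr (by omega)
  rw [← Nat.descFactorial_mul_descFactorial h.le, Nat.cast_mul, mul_div_cancel_right₀ _ hb.ne']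
  calc ((m - a : ℕ) : ℝ) ≤ ((m - b + 1 - (a - b)) ^ (a - b) : ℕ) := by
        exact_mod_cast (show m - a ≤ m - b + 1 - (a - b) by omega).trans
          (Nat.le_self_pow (by omega) _)
    _ ≤ _ := by exact_mod_cast Nat.pow_sub_le_descFactorial _ _

theorem tendsto_descFactorial_div_descFactorial_zero {a b : ℕ} (h : a < b) :
    Tendsto (fun m : ℕ => (m.descFactorial a : ℝ) / m.descFactorial b) atTop (𝓝 0) :=
  (tendsto_descFactorial_div_descFactorial_atTop h).inv_tendsto_atTop.congr fun _ => inv_div _ _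

end DescFactorial

def raise {d : ℕ} (i₁ : Fin d) (z : Fin d → ℤ) (n : ℕ) : Fin d → ℤ :=
  fun i => if i = i₁ then ((n : ℤ) + 1) + z i else z i

section Raise

variable {d : ℕ}

@[simp]
theorem raise_self (i₁ : Fin d) (z : Fin d → ℤ) (n : ℕ) : raise i₁ z n i₁ = (n : ℤ) + 1 + z i₁ :=
  if_pos rfl

@[simp]
theorem raise_of_ne {i i₁ : Fin d} (h : i ≠ i₁) (z : Fin d → ℤ) (n : ℕ) : raise i₁ z n i = z i :=
  if_neg h

theorem le_raise (i₁ : Fin d) (z : Fin d → ℤ) (n : ℕ) : z ≤ raise i₁ z n := by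
  intro i
  by_cases h : i = i₁
  · subst h
    simp only [raise_self]
    omega
  · rw [raise_of_ne h]

theorem raise_add_sub (i₁ : Fin d) (z w : Fin d → ℤ) (n : ℕ) :
    raise i₁ z n + (w - z) = raise i₁ w n := by
  ext i
  simp only [raise, Pi.add_apply, Pi.sub_apply]
  split_ifs <;> ring

theorem xshift_eq_add_sub (ystar : ℕ → Fin d → ℤ) (x : ℕ → Fin d → ℤ) {m : ℕ} (hm : 1 ≤ m)
    (n : ℕ) : xshift d ystar x m n = x n + (ystar m - ystar 1) := by
  ext i
  simp only [xshift, sum_Ico_sub (fun j => ystar j i) hm, Pi.add_apply, Pi.sub_apply]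

end Raise

section Intensity

variable {d : ℕ}

theorem intensity_pos {y x : Fin d → ℤ} (h : y ≤ x) : 0 < intensity d y x := by
  rw [intensity, if_pos fun i => h i]
  exact prod_pos fun i _ => Nat.descFactorial_pos.mpr (Int.toNat_le_toNat (h i))

theorem intensity_eq_zero {y x : Fin d → ℤ} (i : Fin d) (h : x i < y i) :
    intensity d y x = 0 := by
  rw [intensity, if_neg]
  exact fun hle => (hle i).not_gt h

theorem intensity_zero {x : Fin d → ℤ} (hx : 0 ≤ x) : intensity d 0 x = 1 := by
  rw [intensity, if_pos fun i => hx i]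
  simp

theorem exists_intensity_raise_eq {i₁ : Fin d} {y z : Fin d → ℤ} (hz : 0 ≤ z i₁)
    (hy : y ≤ z) : ∃ c : ℕ, 0 < c ∧ ∀ n, intensity d y (raise i₁ z n) =
      c * (n + ((z i₁).toNat + 1)).descFactorial (y i₁).toNat := by
  refine ⟨∏ i ∈ univ.erase i₁, (z i).toNat.descFactorial (y i).toNat,
    prod_pos fun i _ => Nat.descFactorial_pos.mpr (Int.toNat_le_toNat (hy i)), fun n => ?_⟩
  rw [intensity, if_pos fun i => hy.trans (le_raise i₁ z n) i, ← prod_erase_mul _ _ (mem_univ i₁),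
    prod_congr rfl fun i hi => by rw [raise_of_ne (ne_of_mem_erase hi)], raise_self]
  congr 2
  omega

theorem exists_intensity_raise_div_eq {i₁ : Fin d} {y y' z : Fin d → ℤ} (hz : 0 ≤ z i₁)
    (hy : y ≤ z) (hy' : y' ≤ z) : ∃ c : ℝ, 0 < c ∧ ∀ n,
      (intensity d y (raise i₁ z n) : ℝ) / intensity d y' (raise i₁ z n) =
        c * (((n + ((z i₁).toNat + 1)).descFactorial (y i₁).toNat : ℝ) /
          (n + ((z i₁).toNat + 1)).descFactorial (y' i₁).toNat) := by
  obtain ⟨c, hc, hyc⟩ := exists_intensity_raise_eq hz hy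
  obtain ⟨c', hc', hyc'⟩ := exists_intensity_raise_eq hz hy'
  refine ⟨c / c', by positivity, fun n => ?_⟩
  rw [hyc, hyc', Nat.cast_mul, Nat.cast_mul, mul_div_mul_comm]

theorem tendsto_intensity_raise_div_zero {i₁ : Fin d} {y y' z : Fin d → ℤ} (hz : 0 ≤ z i₁)
    (hy : y ≤ z) (hy' : y' ≤ z) (hlt : (y i₁).toNat < (y' i₁).toNat) :
    Tendsto (fun n => (intensity d y (raise i₁ z n) : ℝ) / intensity d y' (raise i₁ z n))
      atTop (𝓝 0) := by
  obtain ⟨c, -, hc⟩ := exists_intensity_raise_div_eq hz hy hy'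
  simp only [hc]
  simpa using ((tendsto_descFactorial_div_descFactorial_zero hlt).comp
    (tendsto_add_atTop_nat _)).const_mul c

theorem tendsto_intensity_raise_div {i₁ : Fin d} {y y' z : Fin d → ℤ} (hz : 0 ≤ z i₁)
    (hy : y ≤ z) (hy' : y' ≤ z) :
    let r := fun n => (intensity d y (raise i₁ z n) : ℝ) / intensity d y' (raise i₁ z n)
    Tendsto r atTop atTop ∨ ∃ c : ℝ, Tendsto r atTop (𝓝 c) := by
  obtain ⟨c, hc, hr⟩ := exists_intensity_raise_div_eq hz hy hy'
  rcases lt_trichotomy (y i₁).toNat (y' i₁).toNat with hlt | heq | hgt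
  · exact Or.inr ⟨0, tendsto_intensity_raise_div_zero hz hy hy' hlt⟩
  · refine Or.inr ⟨c, tendsto_const_nhds.congr' ?_⟩
    filter_upwards [eventually_ge_atTop (y i₁).toNat] with n hn
    have hpos : (0 : ℝ) < (n + ((z i₁).toNat + 1)).descFactorial (y i₁).toNat := by
      exact_mod_cast Nat.descFactorial_pos.mpr (by omega)
    rw [hr, ← heq, div_self hpos.ne', mul_one]
  · simp only [hr]
    exact Or.inl (((tendsto_descFactorial_div_descFactorial_atTop hgt).comp
      (tendsto_add_atTop_nat _)).const_mul_atTop hc)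

theorem intensity_raise_eq_zero {i₁ i₂ : Fin d} (h₂₁ : i₂ ≠ i₁) {y z : Fin d → ℤ}
    (h : z i₂ < y i₂) (n : ℕ) : intensity d y (raise i₁ z n) = 0 :=
  intensity_eq_zero i₂ (by rwa [raise_of_ne h₂₁])

end Intensity

def ComplexesTotallyOrdered (d : ℕ) (Rn : Finset ((Fin d → ℤ) × (Fin d → ℤ))) : Prop :=
  ∀ y y' : Fin d → ℤ, ComplexOf d Rn y → ComplexOf d Rn y' → y ≠ y' →
    (∀ i, y i < y' i) ∨ (∀ i, y' i < y i)

section Network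

variable {d : ℕ} {Rn : Finset ((Fin d → ℤ) × (Fin d → ℤ))}

theorem ComplexesTotallyOrdered.le_or_forall_lt (htot : ComplexesTotallyOrdered d Rn)
    {y z : Fin d → ℤ} (hy : ComplexOf d Rn y) (hz : ComplexOf d Rn z) :
    y ≤ z ∨ ∀ i, z i < y i := by
  by_cases h : y = z
  · exact Or.inl h.le
  · exact (htot y z hy hz h).imp (fun hlt i => (hlt i).le) id

theorem isTierSeq_raise {i₁ i₂ : Fin d} (h₂₁ : i₂ ≠ i₁) {z : Fin d → ℤ} (hz : 0 ≤ z)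
    (hcmp : ∀ y, IsSourceIn d Rn y → y ≤ z ∨ ∀ i, z i < y i) :
    IsTierSeq d Rn (raise i₁ z) := by
  have hray : Tendsto (fun n => raise i₁ z n i₁) atTop atTop := by
    simpa only [raise_self] using tendsto_atTop_add_const_right _ _
      (tendsto_atTop_add_const_right _ 1 tendsto_natCast_atTop_atTop)
  refine ⟨fun n i => (hz i).trans (le_raise i₁ z n i), ⟨i₁, hray⟩, fun i => ?_,
    fun y y' hy hy' => ?_⟩
  · by_cases hi : i = i₁
    · subst hi
      refine Or.inl ⟨hray, fun a b hab => ?_⟩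
      simp only [raise_self]
      omega
    · exact Or.inr ⟨z i, raise_of_ne hi z⟩
  rcases hcmp y' hy' with hy'z | hzy'
  · rcases hcmp y hy with hyz | hzy
    · exact tendsto_intensity_raise_div (hz i₁) hyz hy'z
    · exact Or.inr ⟨0, by simp [intensity_raise_eq_zero h₂₁ (hzy i₂)]⟩
  · exact Or.inr ⟨0, by simp [intensity_raise_eq_zero h₂₁ (hzy' i₂)]⟩

theorem tierLimits_raise {M : ℕ} {ystar : ℕ → Fin d → ℤ} {i₁ i₂ : Fin d} (h₂₁ : i₂ ≠ i₁)
    (hRn : IsRN d Rn) (hmem : IsCycleIn d Rn M ystar) (htot : ComplexesTotallyOrdered d Rn)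
    (honly : ∀ m, 1 ≤ m → m ≤ M → ∀ y' : Fin d → ℤ, (ystar m, y') ∈ Rn →
      y' = ystar (cyc M m))
    {m₀ : ℕ} (hm₀ : 1 ≤ m₀) (hzero : ystar m₀ = 0) :
    TierLimits d Rn M ystar (raise i₁ (ystar 1)) m₀ := by
  intro m hm hmM y y' hr hne
  have hshift : ∀ k, 1 ≤ k → ∀ n,
      xshift d ystar (raise i₁ (ystar 1)) k n = raise i₁ (ystar k) n :=
    fun k hk n => by rw [xshift_eq_add_sub _ _ hk, raise_add_sub]
  have hone : ∀ n, intensity d (ystar m₀) (raise i₁ (ystar m₀) n) = 1 := fun n => by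
    rw [hzero]
    exact intensity_zero (le_raise i₁ 0 n)
  simp only [hshift m₀ hm₀, hshift m hm, hone, Nat.cast_one, one_mul]
  have hyne : y ≠ ystar m := by
    rintro rfl
    exact hne (by rw [honly m hm hmM y' hr])
  rcases htot y (ystar m) ⟨_, hr, Or.inl rfl⟩ ⟨_, hmem m hm hmM, Or.inl rfl⟩ hyne
    with hlt | hgt
  · have hy₀ : 0 ≤ y i₁ := (hRn _ hr).1 i₁
    exact tendsto_intensity_raise_div_zero ((hRn _ (hmem m hm hmM)).1 i₁)
      (fun i => (hlt i).le) le_rfl (by have := hlt i₁; omega)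
  · simp [intensity_raise_eq_zero h₂₁ (hgt i₂)]

end Network

theorem stmt6_general {d M : ℕ} (hd : 2 ≤ d) (hM : 1 ≤ M)
    (Rn : Finset ((Fin d → ℤ) × (Fin d → ℤ))) (hRn : IsRN d Rn)
    (ystar : ℕ → Fin d → ℤ) (hmem : IsCycleIn d Rn M ystar)
    (htot : ∀ y y' : Fin d → ℤ, ComplexOf d Rn y → ComplexOf d Rn y' → y ≠ y' →
      (∀ i, y i < y' i) ∨ (∀ i, y' i < y i))
    (honly : ∀ m, 1 ≤ m → m ≤ M → ∀ y' : Fin d → ℤ, (ystar m, y') ∈ Rn →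
      y' = ystar (cyc M m))
    (hzero : ∃ m0, 1 ≤ m0 ∧ m0 ≤ M ∧ ystar m0 = 0)
    (i1 : Fin d) :
    IsTierSeq d Rn
      (fun n i => if i = i1 then ((n : ℤ) + 1) + ystar 1 i else ystar 1 i) ∧
    IsStrongT1Cycle d Rn M ystar
      (fun n i => if i = i1 then ((n : ℤ) + 1) + ystar 1 i else ystar 1 i) := by
  change IsTierSeq d Rn (raise i1 (ystar 1)) ∧ IsStrongT1Cycle d Rn M ystar (raise i1 (ystar 1))
  obtain ⟨m0, hm0, hm0M, hm0z⟩ := hzero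
  obtain ⟨i2, hi2⟩ := Fintype.exists_ne_of_one_lt_card (by rw [Fintype.card_fin]; omega) i1
  have hy1 : ComplexOf d Rn (ystar 1) := ⟨_, hmem 1 le_rfl hM, Or.inl rfl⟩
  have hcmp : ∀ y, IsSourceIn d Rn y → y ≤ ystar 1 ∨ ∀ i, ystar 1 i < y i :=
    fun y ⟨_, hy⟩ => ComplexesTotallyOrdered.le_or_forall_lt htot ⟨_, hy, Or.inl rfl⟩ hy1
  exact ⟨isTierSeq_raise hi2 (hRn _ (hmem 1 le_rfl hM)).1 hcmp, hmem,
    fun n => intensity_pos (le_raise i1 (ystar 1) n), m0, hm0, hm0M,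
    tierLimits_raise hi2 hRn hmem htot honly hm0 hm0z⟩

/-- Corollary 1 (structural part): under total ordering of the complexes, uniqueness of the
outgoing reactions along the cycle, `y*_{m0} = 0`, and `e_{i_1}` in the span of the reaction
vectors, the explicit sequence is a tier sequence along which `R` is a strong tier-1 cycle. -/
theorem stmt6 {d M : ℕ} (hd : 2 ≤ d) (hM : 1 ≤ M)
    (Rn : Finset ((Fin d → ℤ) × (Fin d → ℤ))) (hRn : IsRN d Rn)
    (ystar : ℕ → Fin d → ℤ) (hmem : IsCycleIn d Rn M ystar)
    (htot : ∀ y y' : Fin d → ℤ, ComplexOf d Rn y → ComplexOf d Rn y' → y ≠ y' →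
      (∀ i, y i < y' i) ∨ (∀ i, y' i < y i))
    (honly : ∀ m, 1 ≤ m → m ≤ M → ∀ y' : Fin d → ℤ, (ystar m, y') ∈ Rn →
      y' = ystar (cyc M m))
    (hzero : ∃ m0, 1 ≤ m0 ∧ m0 ≤ M ∧ ystar m0 = 0)
    (i1 : Fin d)
    (hi1 : (Pi.single i1 1 : Fin d → ℝ) ∈
      Submodule.span ℝ {v : Fin d → ℝ | ∃ r ∈ Rn, v = fun i => ((r.2 i - r.1 i : ℤ) : ℝ)}) :
    IsTierSeq d Rn
      (fun n i => if i = i1 then ((n : ℤ) + 1) + ystar 1 i else ystar 1 i) ∧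
    IsStrongT1Cycle d Rn M ystar
      (fun n i => if i = i1 then ((n : ℤ) + 1) + ystar 1 i else ystar 1 i) :=
  stmt6_general hd hM Rn hRn ystar hmem htot honly hzero i1
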